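/- Let Ψ be the honest leased decryption key (the product over all ℓ positions of the per-position states ψᵢ) and let A(c, d) be its joint Hadamard-basis measurement amplitude. Then the sum of |A(c, d)|² over all outcomes (c, d) such that for every index i with θ i = 1 one has x i = c i + (d i)·(s i 0 + s i 1), equals 1. (Full verification correctness: measuring every qubit of the honest SKE-CR-SKL decryption key in the Hadamard basis yields, with probability 1, outcomes (cᵢ, dᵢ) satisfying x[i] = cᵢ ⊕ dᵢ·(s_{i,0} ⊕ s_{i,1}) at every Hadamard position, so the verification algorithm accepts.) -/

import Mathlib

open Finset

noncomputable section

/-- χ(a) ∈ ℂ equals 1 if a = 0 and −1 if a = 1, for a ∈ 𝔽₂. -/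
def chi (a : ZMod 2) : ℂ := if a = 0 then 1 else -1

/-- Inner product d·u = ∑ᵢ (d i)·(u i) over 𝔽₂. -/
def dotF2 {n : ℕ} (d u : Fin n → ZMod 2) : ZMod 2 := ∑ i, d i * u i

/-- The per-position state ψᵢ of the honest leased decryption key:
a signed superposition at Hadamard positions (θ i = 1), a computational-basis
state at computational positions (θ i = 0). -/
def psiPos (ℓ lam : ℕ) (x θ : Fin ℓ → ZMod 2)
    (s : Fin ℓ → ZMod 2 → (Fin lam → ZMod 2)) (i : Fin ℓ) :
    ZMod 2 × (Fin lam → ZMod 2) → ℂ := fun p =>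
  if θ i = 1 then
    (1 / (Real.sqrt 2 : ℂ)) * (if p.1 = 0 ∧ p.2 = s i 0 then 1 else 0)
      + (chi (x i) / (Real.sqrt 2 : ℂ)) * (if p.1 = 1 ∧ p.2 = s i 1 then 1 else 0)
  else
    (if p.1 = x i ∧ p.2 = s i (x i) then 1 else 0)

/-- The honest leased decryption key: the product state Ψ(w) = ∏ᵢ ψᵢ(w i). -/
def keyState (ℓ lam : ℕ) (x θ : Fin ℓ → ZMod 2)
    (s : Fin ℓ → ZMod 2 → (Fin lam → ZMod 2)) :
    (Fin ℓ → ZMod 2 × (Fin lam → ZMod 2)) → ℂ := fun w =>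
  ∏ i, psiPos ℓ lam x θ s i (w i)

/-- The joint Hadamard-basis measurement amplitude
A(c, d) = 2^{−ℓ(λ+1)/2} · ∑_w χ(∑ᵢ ((c i)·(w i).1 + (d i)·(w i).2)) · Ψ(w). -/
def jointAmp (ℓ lam : ℕ) (x θ : Fin ℓ → ZMod 2)
    (s : Fin ℓ → ZMod 2 → (Fin lam → ZMod 2))
    (c : Fin ℓ → ZMod 2) (d : Fin ℓ → Fin lam → ZMod 2) : ℂ :=
  (1 / (Real.sqrt (2 ^ (ℓ * (lam + 1))) : ℂ)) *
    ∑ w : Fin ℓ → ZMod 2 × (Fin lam → ZMod 2),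
      chi (∑ i, (c i * (w i).1 + dotF2 (d i) ((w i).2))) * keyState ℓ lam x θ s w

/- ----------------- auxiliary lemmas ----------------- -/

lemma chi_add (a b : ZMod 2) : chi (a + b) = chi a * chi b := by
  have h : ∀ a : ZMod 2, a = 0 ∨ a = 1 := by decide
  rcases h a with rfl | rfl <;> rcases h b with rfl | rfl <;>
    simp [chi, show (1 : ZMod 2) + 1 = 0 from rfl]

lemma chi_zero : chi 0 = 1 := by simp [chi]

lemma abs_chi (a : ZMod 2) : ‖chi a‖ = 1 := by
  have h : ∀ a : ZMod 2, a = 0 ∨ a = 1 := by decide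
  rcases h a with rfl | rfl <;> simp [chi]

lemma chi_sum {ι : Type*} (t : Finset ι) (f : ι → ZMod 2) :
    chi (∑ i ∈ t, f i) = ∏ i ∈ t, chi (f i) := by
  induction t using Finset.cons_induction with
  | empty => simp [chi_zero]
  | cons a t ha ih => simp [Finset.sum_cons, Finset.prod_cons, chi_add, ih]

lemma dotF2_add {n : ℕ} (d u v : Fin n → ZMod 2) :
    dotF2 d (u + v) = dotF2 d u + dotF2 d v := by
  simp [dotF2, mul_add, Finset.sum_add_distrib]

lemma z2lin (c t0 t1 : ZMod 2) : x₀ = c + (t0 + t1) → x₀ + (c + t1) = t0 := by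
  revert c t0 t1 x₀; decide

lemma z2eq (a b c : ZMod 2) : a = b + c ↔ b = a + c := by
  revert a b c; decide

/-- Per-position Hadamard amplitude (unnormalized). -/
def amp (ℓ lam : ℕ) (x θ : Fin ℓ → ZMod 2)
    (s : Fin ℓ → ZMod 2 → (Fin lam → ZMod 2)) (i : Fin ℓ)
    (q : ZMod 2 × (Fin lam → ZMod 2)) : ℂ :=
  ∑ p : ZMod 2 × (Fin lam → ZMod 2),
    chi (q.1 * p.1 + dotF2 q.2 p.2) * psiPos ℓ lam x θ s i p

lemma ampH (ℓ lam : ℕ) (x θ : Fin ℓ → ZMod 2)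
    (s : Fin ℓ → ZMod 2 → (Fin lam → ZMod 2)) (i : Fin ℓ) (h : θ i = 1)
    (q : ZMod 2 × (Fin lam → ZMod 2)) :
    amp ℓ lam x θ s i q
      = (1 / (Real.sqrt 2 : ℂ)) * chi (dotF2 q.2 (s i 0))
        + (chi (x i) / (Real.sqrt 2 : ℂ)) * chi (q.1 + dotF2 q.2 (s i 1)) := by
  have key : ∀ p : ZMod 2 × (Fin lam → ZMod 2),
      chi (q.1 * p.1 + dotF2 q.2 p.2) * psiPos ℓ lam x θ s i p
      = (1 / (Real.sqrt 2 : ℂ)) * chi (q.1 * p.1 + dotF2 q.2 p.2) *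
          (if p = ((0 : ZMod 2), s i 0) then 1 else 0)
        + (chi (x i) / (Real.sqrt 2 : ℂ)) * chi (q.1 * p.1 + dotF2 q.2 p.2) *
          (if p = ((1 : ZMod 2), s i 1) then 1 else 0) := by
    intro p
    simp only [psiPos, h, if_pos, Prod.ext_iff]
    ring
  unfold amp
  rw [Finset.sum_congr rfl fun p _ => key p, Finset.sum_add_distrib]
  simp [Finset.sum_ite_eq', mul_ite]

lemma ampC (ℓ lam : ℕ) (x θ : Fin ℓ → ZMod 2)
    (s : Fin ℓ → ZMod 2 → (Fin lam → ZMod 2)) (i : Fin ℓ) (h : ¬ θ i = 1)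
    (q : ZMod 2 × (Fin lam → ZMod 2)) :
    amp ℓ lam x θ s i q = chi (q.1 * x i + dotF2 q.2 (s i (x i))) := by
  have key : ∀ p : ZMod 2 × (Fin lam → ZMod 2),
      chi (q.1 * p.1 + dotF2 q.2 p.2) * psiPos ℓ lam x θ s i p
      = chi (q.1 * p.1 + dotF2 q.2 p.2) *
          (if p = ((x i : ZMod 2), s i (x i)) then 1 else 0) := by
    intro p
    simp only [psiPos, h, if_neg, if_false, Prod.ext_iff]
  unfold amp
  rw [Finset.sum_congr rfl fun p _ => key p]
  simp [Finset.sum_ite_eq', mul_ite]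

lemma sq_abs_ampC (ℓ lam : ℕ) (x θ : Fin ℓ → ZMod 2)
    (s : Fin ℓ → ZMod 2 → (Fin lam → ZMod 2)) (i : Fin ℓ) (h : ¬ θ i = 1)
    (q : ZMod 2 × (Fin lam → ZMod 2)) :
    ‖amp ℓ lam x θ s i q‖ ^ 2 = 1 := by
  rw [ampC ℓ lam x θ s i h q, abs_chi]; norm_num

lemma sq_abs_ampH (ℓ lam : ℕ) (x θ : Fin ℓ → ZMod 2)
    (s : Fin ℓ → ZMod 2 → (Fin lam → ZMod 2)) (i : Fin ℓ) (h : θ i = 1)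
    (q : ZMod 2 × (Fin lam → ZMod 2))
    (hacc : x i = q.1 + dotF2 q.2 (s i 0 + s i 1)) :
    ‖amp ℓ lam x θ s i q‖ ^ 2 = 2 := by
  rw [ampH ℓ lam x θ s i h q]
  rw [dotF2_add] at hacc
  have h1 : chi (x i) * chi (q.1 + dotF2 q.2 (s i 1)) = chi (dotF2 q.2 (s i 0)) := by
    rw [← chi_add, z2lin _ _ _ hacc]
  have : (1 / (Real.sqrt 2 : ℂ)) * chi (dotF2 q.2 (s i 0))
        + chi (x i) / (Real.sqrt 2 : ℂ) * chi (q.1 + dotF2 q.2 (s i 1))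
      = (2 / (Real.sqrt 2 : ℂ)) * chi (dotF2 q.2 (s i 0)) := by
    linear_combination (1 / (Real.sqrt 2 : ℂ)) * h1
  rw [this, norm_mul, abs_chi, mul_one, norm_div, Complex.norm_real, Real.norm_eq_abs,
    abs_of_nonneg (Real.sqrt_nonneg 2)]
  rw [Complex.norm_two, div_pow, Real.sq_sqrt (by norm_num : (2:ℝ) ≥ 0)]
  norm_num

/-- Factorization of the joint amplitude. -/
lemma jointAmp_factor (ℓ lam : ℕ) (x θ : Fin ℓ → ZMod 2)
    (s : Fin ℓ → ZMod 2 → (Fin lam → ZMod 2))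
    (c : Fin ℓ → ZMod 2) (d : Fin ℓ → Fin lam → ZMod 2) :
    jointAmp ℓ lam x θ s c d
      = (1 / (Real.sqrt (2 ^ (ℓ * (lam + 1))) : ℂ)) *
          ∏ i, amp ℓ lam x θ s i (c i, d i) := by
  unfold jointAmp keyState amp
  congr 1
  have : ∀ w : Fin ℓ → ZMod 2 × (Fin lam → ZMod 2),
      chi (∑ i, (c i * (w i).1 + dotF2 (d i) ((w i).2))) *
        ∏ i, psiPos ℓ lam x θ s i (w i)
      = ∏ i, chi (c i * (w i).1 + dotF2 (d i) ((w i).2)) * psiPos ℓ lam x θ s i (w i) := by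
    intro w
    rw [chi_sum, ← Finset.prod_mul_distrib]
  rw [Finset.sum_congr rfl fun w _ => this w]
  rw [← Fintype.piFinset_univ]
  exact (Finset.prod_univ_sum (fun _ : Fin ℓ => (univ : Finset (ZMod 2 × (Fin lam → ZMod 2)))) (fun i p => chi ((c i) * p.1 + dotF2 (d i) p.2) * psiPos ℓ lam x θ s i p)).symm

lemma sumC (ℓ lam : ℕ) (x θ : Fin ℓ → ZMod 2)
    (s : Fin ℓ → ZMod 2 → (Fin lam → ZMod 2)) (i : Fin ℓ) (h : ¬ θ i = 1) :
    ∑ q : ZMod 2 × (Fin lam → ZMod 2),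
      ‖amp ℓ lam x θ s i q‖ ^ 2 = (2:ℝ) ^ (lam + 1) := by
  rw [Finset.sum_congr rfl fun q _ => sq_abs_ampC ℓ lam x θ s i h q]
  rw [Finset.sum_const, Finset.card_univ, Fintype.card_prod, Fintype.card_fun]
  simp [pow_succ, mul_comm]

lemma sumH (ℓ lam : ℕ) (x θ : Fin ℓ → ZMod 2)
    (s : Fin ℓ → ZMod 2 → (Fin lam → ZMod 2)) (i : Fin ℓ) (h : θ i = 1) :
    ∑ q ∈ Finset.univ.filter
        (fun q : ZMod 2 × (Fin lam → ZMod 2) =>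
          x i = q.1 + dotF2 q.2 (s i 0 + s i 1)),
      ‖amp ℓ lam x θ s i q‖ ^ 2 = (2:ℝ) ^ (lam + 1) := by
  rw [Finset.sum_filter, Fintype.sum_prod_type, Finset.sum_comm]
  have step : ∀ u : Fin lam → ZMod 2,
      (∑ b : ZMod 2, if x i = b + dotF2 u (s i 0 + s i 1)
        then ‖amp ℓ lam x θ s i (b, u)‖ ^ 2 else 0) = 2 := by
    intro u
    have : ∀ b : ZMod 2, (if x i = b + dotF2 u (s i 0 + s i 1)
          then ‖amp ℓ lam x θ s i (b, u)‖ ^ 2 else 0)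
        = (if b = x i + dotF2 u (s i 0 + s i 1)
          then ‖amp ℓ lam x θ s i (b, u)‖ ^ 2 else 0) := by
      intro b; exact if_congr (z2eq _ _ _) rfl rfl
    rw [Finset.sum_congr rfl fun b _ => this b, Finset.sum_ite_eq' Finset.univ]
    rw [if_pos (Finset.mem_univ _)]
    exact sq_abs_ampH ℓ lam x θ s i h _ ((z2eq _ _ _).mpr rfl)
  rw [Finset.sum_congr rfl fun u _ => step u, Finset.sum_const, Finset.card_univ,
    Fintype.card_fun]
  simp [pow_succ]

/-- Full verification correctness: measuring every qubit of the honest SKE-CR-SKL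
decryption key in the Hadamard basis yields, with probability 1, outcomes (cᵢ, dᵢ)
satisfying x[i] = cᵢ ⊕ dᵢ·(s_{i,0} ⊕ s_{i,1}) at every Hadamard position. -/
theorem jointAmp_accept_prob_one (ℓ lam : ℕ) (x θ : Fin ℓ → ZMod 2)
    (s : Fin ℓ → ZMod 2 → (Fin lam → ZMod 2)) :
    ∑ p ∈ Finset.univ.filter
        (fun p : (Fin ℓ → ZMod 2) × (Fin ℓ → Fin lam → ZMod 2) =>
          ∀ i, θ i = 1 → x i = p.1 i + dotF2 (p.2 i) (s i 0 + s i 1)),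
      ‖jointAmp ℓ lam x θ s p.1 p.2‖ ^ 2 = 1 := by
  classical
  have habs : ∀ (c : Fin ℓ → ZMod 2) (d : Fin ℓ → Fin lam → ZMod 2),
      ‖jointAmp ℓ lam x θ s c d‖ ^ 2
        = (1 / (2:ℝ) ^ (ℓ * (lam + 1))) *
            ∏ i, ‖amp ℓ lam x θ s i (c i, d i)‖ ^ 2 := by
    intro c d
    rw [jointAmp_factor, norm_mul, mul_pow, Complex.norm_prod, ← Finset.prod_pow]
    congr 1
    rw [norm_div, norm_one, Complex.norm_real, Real.norm_eq_abs, abs_of_nonneg (Real.sqrt_nonneg _),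
      div_pow, one_pow, Real.sq_sqrt (by positivity)]
  rw [Finset.sum_congr rfl (fun p _ => habs p.1 p.2), ← Finset.mul_sum]
  have key : (∑ p ∈ Finset.univ.filter
        (fun p : (Fin ℓ → ZMod 2) × (Fin ℓ → Fin lam → ZMod 2) =>
          ∀ i, θ i = 1 → x i = p.1 i + dotF2 (p.2 i) (s i 0 + s i 1)),
        ∏ i, ‖amp ℓ lam x θ s i (p.1 i, p.2 i)‖ ^ 2)
      = ∏ i, ∑ q ∈ Finset.univ.filter
          (fun q : ZMod 2 × (Fin lam → ZMod 2) =>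
            θ i = 1 → x i = q.1 + dotF2 q.2 (s i 0 + s i 1)),
          ‖amp ℓ lam x θ s i q‖ ^ 2 := by
    rw [Finset.prod_univ_sum]
    have hpi : Fintype.piFinset (fun i => Finset.univ.filter
          (fun q : ZMod 2 × (Fin lam → ZMod 2) =>
            θ i = 1 → x i = q.1 + dotF2 q.2 (s i 0 + s i 1)))
        = Finset.univ.filter (fun g : Fin ℓ → ZMod 2 × (Fin lam → ZMod 2) =>
            ∀ i, θ i = 1 → x i = (g i).1 + dotF2 (g i).2 (s i 0 + s i 1)) := by
      ext g; simp [Fintype.mem_piFinset]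
    rw [hpi, Finset.sum_filter, Finset.sum_filter]
    refine Fintype.sum_equiv
      (Equiv.arrowProdEquivProdArrow (Fin ℓ) (fun _ => ZMod 2) (fun _ => Fin lam → ZMod 2)).symm _ _
      (fun p => ?_)
    simp [Equiv.arrowProdEquivProdArrow]
    exact if_congr Iff.rfl rfl rfl
  have hsum : ∀ i : Fin ℓ, (∑ q ∈ Finset.univ.filter
          (fun q : ZMod 2 × (Fin lam → ZMod 2) =>
            θ i = 1 → x i = q.1 + dotF2 q.2 (s i 0 + s i 1)),
          ‖amp ℓ lam x θ s i q‖ ^ 2) = (2:ℝ) ^ (lam + 1) := by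
    intro i
    by_cases hθ : θ i = 1
    · rw [show (Finset.univ.filter
            (fun q : ZMod 2 × (Fin lam → ZMod 2) =>
              θ i = 1 → x i = q.1 + dotF2 q.2 (s i 0 + s i 1)))
            = Finset.univ.filter (fun q : ZMod 2 × (Fin lam → ZMod 2) =>
              x i = q.1 + dotF2 q.2 (s i 0 + s i 1)) from
            Finset.filter_congr (fun q _ => by simp [hθ])]
      exact sumH ℓ lam x θ s i hθ
    · rw [Finset.filter_true_of_mem (fun q _ h => absurd h hθ)]
      exact sumC ℓ lam x θ s i hθ
  rw [key, Finset.prod_congr rfl (fun i _ => hsum i), Finset.prod_const,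
    Finset.card_univ, Fintype.card_fin, ← pow_mul, mul_comm (lam + 1) ℓ]
  field_simp

end
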